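/- arXiv:2501.12322 — 4 statements merged into one kernel-verified Lean document; each statement's English description precedes it below -/
import Mathlib

section
/- Let U1, U2, U3 be subspaces of a finite-dimensional vector space V over a field F. Then the three quantities dim(U1 ⊓ (U2 ⊔ U3)) − dim((U1 ⊓ U2) ⊔ (U1 ⊓ U3)), dim(U2 ⊓ (U1 ⊔ U3)) − dim((U2 ⊓ U1) ⊔ (U2 ⊓ U3)), and dim(U3 ⊓ (U1 ⊔ U2)) − dim((U3 ⊓ U1) ⊔ (U3 ⊓ U2)) are all equal. -/
/-!
Applying `dim (s ⊔ t) + dim (s ⊓ t) = dim s + dim t` to `U₁` and `U₂ ⊔ U₃`, to `U₁ ⊓ U₂` and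
`U₁ ⊓ U₃`, and to `U₂` and `U₃` expresses the distributivity defect
`dim (U₁ ⊓ (U₂ ⊔ U₃)) - dim (U₁ ⊓ U₂ ⊔ U₁ ⊓ U₃)` as an inclusion–exclusion sum over `U₁, U₂, U₃`
that is symmetric in the three subspaces.
-/

open Module

theorem Submodule.finrank_inf_sup_sub_finrank_sup_inf {K V : Type*} [DivisionRing K]
    [AddCommGroup V] [Module K V] [FiniteDimensional K V] (a b c : Submodule K V) :
    (finrank K ↥(a ⊓ (b ⊔ c)) : ℤ) - finrank K ↥(a ⊓ b ⊔ a ⊓ c)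
      = finrank K a + finrank K b + finrank K c - finrank K ↥(a ⊔ b ⊔ c)
        - finrank K ↥(a ⊓ b) - finrank K ↥(a ⊓ c) - finrank K ↥(b ⊓ c)
        + finrank K ↥(a ⊓ b ⊓ c) := by
  have h_a := finrank_sup_add_finrank_inf_eq a (b ⊔ c)
  have h_ab_ac := finrank_sup_add_finrank_inf_eq (a ⊓ b) (a ⊓ c)
  have h_bc := finrank_sup_add_finrank_inf_eq b c
  rw [← sup_assoc] at h_a
  rw [← inf_inf_distrib_left, ← inf_assoc] at h_ab_ac
  omega

theorem stmt_0 (F V : Type*) [Field F] [AddCommGroup V] [Module F V]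
    [FiniteDimensional F V] (U1 U2 U3 : Submodule F V) :
    (finrank F ↥(U1 ⊓ (U2 ⊔ U3)) : ℤ) - finrank F ↥((U1 ⊓ U2) ⊔ (U1 ⊓ U3))
      = (finrank F ↥(U2 ⊓ (U1 ⊔ U3)) : ℤ) - finrank F ↥((U2 ⊓ U1) ⊔ (U2 ⊓ U3)) ∧
    (finrank F ↥(U2 ⊓ (U1 ⊔ U3)) : ℤ) - finrank F ↥((U2 ⊓ U1) ⊔ (U2 ⊓ U3))
      = (finrank F ↥(U3 ⊓ (U1 ⊔ U2)) : ℤ) - finrank F ↥((U3 ⊓ U1) ⊔ (U3 ⊓ U2)) := by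
  have h_sup₂ : U2 ⊔ U1 ⊔ U3 = U1 ⊔ U2 ⊔ U3 := by ac_rfl
  have h_sup₃ : U3 ⊔ U1 ⊔ U2 = U1 ⊔ U2 ⊔ U3 := by ac_rfl
  have h_inf₂ : U2 ⊓ U1 ⊓ U3 = U1 ⊓ U2 ⊓ U3 := by ac_rfl
  have h_inf₃ : U3 ⊓ U1 ⊓ U2 = U1 ⊓ U2 ⊓ U3 := by ac_rfl
  simp only [Submodule.finrank_inf_sup_sub_finrank_sup_inf]
  rw [h_sup₂, h_sup₃, h_inf₂, h_inf₃, inf_comm U2 U1, inf_comm U3 U1, inf_comm U3 U2]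
  constructor <;> ring
end

section
/- Let t ≥ 3 and let U_1, …, U_t be subspaces of V. For any two distinct indices i ≠ j in {1,…,t}, if W_i is an admissible complement at i and W_j is an admissible complement at j, then W_i ⊓ W_j = 0 (any two admissible complements are linearly independent, regardless of how they are chosen). -/
open Module

/-- `A_k := U_k ⊓ (⊔_{j ≠ k} U_j)`. -/
def subA {F V : Type*} [Field F] [AddCommGroup V] [Module F V] {t : ℕ}
    (U : Fin t → Submodule F V) (k : Fin t) : Submodule F V :=
  U k ⊓ (⨆ j : Fin t, ⨆ _ : j ≠ k, U j)

/-- `C_k := ⊔_{ℓ ≠ k} ( U_k ⊓ (⊔_{j ∉ {k,ℓ}} U_j) )`. -/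
def subC {F V : Type*} [Field F] [AddCommGroup V] [Module F V] {t : ℕ}
    (U : Fin t → Submodule F V) (k : Fin t) : Submodule F V :=
  ⨆ l : Fin t, ⨆ _ : l ≠ k,
    (U k ⊓ (⨆ j : Fin t, ⨆ _ : j ≠ k ∧ j ≠ l, U j))

/-- `W` is an admissible complement at `k`: `W ≤ A_k`, `W ⊓ C_k = 0`, `W ⊔ C_k = A_k`. -/
def IsAdmissibleComplement {F V : Type*} [Field F] [AddCommGroup V] [Module F V] {t : ℕ}
    (U : Fin t → Submodule F V) (k : Fin t) (W : Submodule F V) : Prop :=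
  W ≤ subA U k ∧ W ⊓ subC U k = ⊥ ∧ W ⊔ subC U k = subA U k

/-!
With three indices available, any `j ≠ k` can be paired with a third index `l ∉ {j, k}`; then
`U_k ⊓ U_j` is one of the pieces `U_k ⊓ (⊔_{j' ∉ {k,l}} U_{j'})` of `C_k`. Two admissible
complements `W_i ≤ U_i`, `W_j ≤ U_j` therefore meet inside `W_i ⊓ C_i = 0`.
-/

section

variable {F V : Type*} [Field F] [AddCommGroup V] [Module F V] {t : ℕ}
  {U : Fin t → Submodule F V}

theorem inf_le_subC {j k l : Fin t} (hjk : j ≠ k) (hjl : j ≠ l) (hlk : l ≠ k) :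
    U k ⊓ U j ≤ subC U k :=
  calc U k ⊓ U j ≤ U k ⊓ ⨆ j' : Fin t, ⨆ _ : j' ≠ k ∧ j' ≠ l, U j' :=
        inf_le_inf_left _ (le_iSup₂_of_le (f := fun j' (_ : j' ≠ k ∧ j' ≠ l) => U j')
          j ⟨hjk, hjl⟩ le_rfl)
    _ ≤ subC U k :=
        le_iSup₂_of_le (f := fun l (_ : l ≠ k) => U k ⊓ ⨆ j' : Fin t, ⨆ _ : j' ≠ k ∧ j' ≠ l, U j')
          l hlk le_rfl

theorem inf_le_subC_of_two_lt (ht : 2 < t) {j k : Fin t} (hjk : j ≠ k) :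
    U k ⊓ U j ≤ subC U k := by
  obtain ⟨l, hlj, hlk⟩ := Fin.exists_ne_and_ne_of_two_lt j k ht
  exact inf_le_subC hjk hlj.symm hlk

theorem IsAdmissibleComplement.le {k : Fin t} {W : Submodule F V}
    (hW : IsAdmissibleComplement U k W) : W ≤ U k :=
  hW.1.trans inf_le_left

end

theorem stmt_2_general (F V : Type*) [Field F] [AddCommGroup V] [Module F V]
    (t : ℕ) (ht : 3 ≤ t) (U : Fin t → Submodule F V)
    (i j : Fin t) (hij : i ≠ j) (Wi Wj : Submodule F V)
    (hWi : IsAdmissibleComplement U i Wi) (hWj : IsAdmissibleComplement U j Wj) :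
    Wi ⊓ Wj = ⊥ := by
  have hmeet : Wi ⊓ Wj ≤ subC U i :=
    (inf_le_inf hWi.le hWj.le).trans (inf_le_subC_of_two_lt ht hij.symm)
  rw [← le_bot_iff, ← hWi.2.1]
  exact le_inf inf_le_left hmeet

theorem stmt_2 (F V : Type*) [Field F] [AddCommGroup V] [Module F V]
    [FiniteDimensional F V] (t : ℕ) (ht : 3 ≤ t) (U : Fin t → Submodule F V)
    (i j : Fin t) (hij : i ≠ j) (Wi Wj : Submodule F V)
    (hWi : IsAdmissibleComplement U i Wi) (hWj : IsAdmissibleComplement U j Wj) :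
    Wi ⊓ Wj = ⊥ :=
  stmt_2_general F V t ht U i j hij Wi Wj hWi hWj
end

section
/- Let V_A and V_1, …, V_t be subspaces of a finite-dimensional vector space V over a field F, and let n_1, …, n_t be nonnegative integers such that for every subset L ⊆ {1,…,t} one has Σ_{k ∈ L} n_k ≤ dim( V_A ⊔ (⊔_{k ∈ L} V_k) ) − dim V_A. Then there exist subspaces W_1, …, W_t with W_k ≤ V_k and dim W_k = n_k for every k, such that dim( V_A ⊔ W_1 ⊔ ⋯ ⊔ W_t ) = dim V_A + n_1 + ⋯ + n_t (i.e. the family V_A, W_1, …, W_t is in direct position). -/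
open Module

section Aux
variable {F V : Type*} [Field F] [AddCommGroup V] [Module F V] [FiniteDimensional F V]

private lemma finrank_finsetSup_le {ι : Type*} [DecidableEq ι] (s : Finset ι)
    (W : ι → Submodule F V) :
    finrank F ↥(s.sup W) ≤ ∑ i ∈ s, finrank F ↥(W i) := by
  induction s using Finset.induction_on with
  | empty => simp
  | @insert a s ha ih =>
      rw [Finset.sup_insert, Finset.sum_insert ha]
      exact le_trans (Submodule.finrank_add_le_finrank_add_finrank _ _) (by omega)

private lemma finrank_sup_span_singleton (p : Submodule F V) {v : V} (hv : v ∉ p) :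
    finrank F ↥(p ⊔ F ∙ v) = finrank F ↥p + 1 := by
  have h0 : v ≠ 0 := fun h => hv (h ▸ p.zero_mem)
  have hinf : p ⊓ (F ∙ v) = ⊥ := by
    rw [eq_bot_iff]
    intro x hx
    rw [Submodule.mem_inf, Submodule.mem_span_singleton] at hx
    obtain ⟨hxp, c, rfl⟩ := hx
    rcases eq_or_ne c 0 with rfl | hc
    · simp
    · exfalso
      apply hv
      have := p.smul_mem c⁻¹ hxp
      rwa [smul_smul, inv_mul_cancel₀ hc, one_smul] at this
  have key := Submodule.finrank_sup_add_finrank_inf_eq p (F ∙ v)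
  rw [hinf, finrank_span_singleton h0] at key
  simp only [finrank_bot] at key
  omega

private lemma aux {t : ℕ} (Vs : Fin t → Submodule F V) (N : ℕ) :
    ∀ (VA : Submodule F V) (n : Fin t → ℕ), (∑ k, n k = N) →
    (∀ L : Finset (Fin t),
      ((∑ k ∈ L, n k : ℕ) : ℤ)
        ≤ (finrank F ↥(VA ⊔ ⨆ k ∈ L, Vs k) : ℤ) - finrank F ↥VA) →
    ∃ W : Fin t → Submodule F V,
      (∀ k, W k ≤ Vs k) ∧
      (∀ k, finrank F ↥(W k) = n k) ∧
      finrank F ↥(VA ⊔ ⨆ k, W k) = finrank F ↥VA + ∑ k, n k := by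
  induction N with
  | zero =>
      intro VA n hsum _hn
      have hzero : ∀ k, n k = 0 := by
        intro k
        have := Finset.sum_eq_zero_iff.mp hsum k (Finset.mem_univ k)
        exact this
      refine ⟨fun _ => ⊥, fun k => bot_le, fun k => by simp [hzero k], ?_⟩
      have hb : (⨆ _k : Fin t, (⊥ : Submodule F V)) = ⊥ :=
        le_antisymm (iSup_le fun _ => le_rfl) bot_le
      rw [hb, sup_bot_eq]
      simp [hzero]
  | succ N ih =>
      intro VA n hsum hn
      classical
      replace hn : ∀ L : Finset (Fin t),
          ((∑ k ∈ L, n k : ℕ) : ℤ)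
            ≤ (finrank F ↥(VA ⊔ L.sup Vs) : ℤ) - finrank F ↥VA := by
        intro L
        rw [Finset.sup_eq_iSup]
        exact hn L
      obtain ⟨j, hj⟩ : ∃ j, n j ≠ 0 := by
        by_contra h
        push_neg at h
        simp [h] at hsum
      -- natural number form of the hypothesis
      have hnn : ∀ L : Finset (Fin t),
          finrank F ↥VA + ∑ k ∈ L, n k ≤ finrank F ↥(VA ⊔ L.sup Vs) := by
        intro L
        have := hn L
        omega
      -- monotonicity
      have hmono : ∀ L₁ L₂ : Finset (Fin t), L₁ ⊆ L₂ →
          finrank F ↥(VA ⊔ L₁.sup Vs) ≤ finrank F ↥(VA ⊔ L₂.sup Vs) :=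
        fun L₁ L₂ h => Submodule.finrank_mono (sup_le_sup_left (Finset.sup_mono h) _)
      -- submodularity
      have hsubmod : ∀ L₁ L₂ : Finset (Fin t),
          finrank F ↥(VA ⊔ (L₁ ∪ L₂).sup Vs) + finrank F ↥(VA ⊔ (L₁ ∩ L₂).sup Vs)
            ≤ finrank F ↥(VA ⊔ L₁.sup Vs) + finrank F ↥(VA ⊔ L₂.sup Vs) := by
        intro L₁ L₂
        have h1 : (VA ⊔ L₁.sup Vs) ⊔ (VA ⊔ L₂.sup Vs) = VA ⊔ (L₁ ∪ L₂).sup Vs := by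
          rw [Finset.sup_union, sup_sup_sup_comm, sup_idem]
        have h2 : VA ⊔ (L₁ ∩ L₂).sup Vs ≤ (VA ⊔ L₁.sup Vs) ⊓ (VA ⊔ L₂.sup Vs) :=
          le_inf (sup_le_sup_left (Finset.sup_mono Finset.inter_subset_left) _)
            (sup_le_sup_left (Finset.sup_mono Finset.inter_subset_right) _)
        have key := Submodule.finrank_sup_add_finrank_inf_eq (VA ⊔ L₁.sup Vs) (VA ⊔ L₂.sup Vs)
        rw [h1] at key
        have := Submodule.finrank_mono h2
        omega
      -- tight sets
      set d := finrank F ↥VA with hd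
      have htight_union : ∀ L₁, (finrank F ↥(VA ⊔ L₁.sup Vs) = d + ∑ k ∈ L₁, n k ∧ j ∉ L₁) →
          ∀ L₂, (finrank F ↥(VA ⊔ L₂.sup Vs) = d + ∑ k ∈ L₂, n k ∧ j ∉ L₂) →
          (finrank F ↥(VA ⊔ (L₁ ⊔ L₂).sup Vs) = d + ∑ k ∈ (L₁ ⊔ L₂), n k ∧ j ∉ L₁ ⊔ L₂) := by
        rintro L₁ ⟨h1, hj1⟩ L₂ ⟨h2, hj2⟩
        simp only [Finset.sup_eq_union, Finset.mem_union]
        have hsums : ∑ k ∈ (L₁ ∪ L₂), n k + ∑ k ∈ (L₁ ∩ L₂), n k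
            = ∑ k ∈ L₁, n k + ∑ k ∈ L₂, n k := Finset.sum_union_inter
        have hu := hnn (L₁ ∪ L₂)
        have hi := hnn (L₁ ∩ L₂)
        have hs := hsubmod L₁ L₂
        refine ⟨by omega, by tauto⟩
      set TS : Finset (Finset (Fin t)) :=
        Finset.univ.filter
          (fun L => finrank F ↥(VA ⊔ L.sup Vs) = d + ∑ k ∈ L, n k ∧ j ∉ L) with hTS
      set Lstar := TS.sup id with hLstar
      have hLstarP : finrank F ↥(VA ⊔ Lstar.sup Vs) = d + ∑ k ∈ Lstar, n k ∧ j ∉ Lstar := by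
        rw [hLstar]
        apply Finset.sup_induction
          (p := fun L => finrank F ↥(VA ⊔ L.sup Vs) = d + ∑ k ∈ L, n k ∧ j ∉ L)
        · refine ⟨?_, by simp⟩
          simp only [Finset.bot_eq_empty, Finset.sup_empty, Finset.sum_empty, add_zero, hd]
          exact congrArg (fun W : Submodule F V => finrank F ↥W) (sup_bot_eq VA)
        · exact htight_union
        · intro L hL
          exact (Finset.mem_filter.mp hL).2
      have hsubLstar : ∀ L : Finset (Fin t),
          finrank F ↥(VA ⊔ L.sup Vs) = d + ∑ k ∈ L, n k → j ∉ L → L ⊆ Lstar := by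
        intro L h1 h2
        have hmem : L ∈ TS := Finset.mem_filter.mpr ⟨Finset.mem_univ _, ⟨h1, h2⟩⟩
        have : id L ≤ TS.sup id := Finset.le_sup hmem
        exact this
      -- find v
      have hnotle : ¬ (Vs j ≤ VA ⊔ Lstar.sup Vs) := by
        intro hle
        have hins := hnn (insert j Lstar)
        have heq : VA ⊔ (insert j Lstar).sup Vs = VA ⊔ Lstar.sup Vs := by
          rw [Finset.sup_insert]
          apply le_antisymm
          · exact sup_le le_sup_left (sup_le hle (le_sup_of_le_right le_rfl))
          · exact sup_le le_sup_left (le_sup_of_le_right le_sup_right)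
        rw [heq] at hins
        rw [Finset.sum_insert hLstarP.2] at hins
        have := hLstarP.1
        omega
      obtain ⟨v, hvVsj, hvnot⟩ := SetLike.not_le_iff_exists.mp hnotle
      have hvVA : v ∉ VA := fun h => hvnot (Submodule.mem_sup_left h)
      set VA' := VA ⊔ F ∙ v with hVA'
      have hdimVA' : finrank F ↥VA' = d + 1 := finrank_sup_span_singleton VA hvVA
      set n' := Function.update n j (n j - 1) with hn'def
      have hsum' : ∑ k, n' k = N := by
        rw [hn'def, Finset.sum_update_of_mem (Finset.mem_univ j)]
        have : n j + ∑ k ∈ Finset.univ.erase j, n k = ∑ k, n k :=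
          (Finset.add_sum_erase _ _ (Finset.mem_univ j))
        rw [Finset.sdiff_singleton_eq_erase]
        omega
      -- verify hypothesis for VA', n'
      have hn2 : ∀ L : Finset (Fin t),
          ((∑ k ∈ L, n' k : ℕ) : ℤ)
            ≤ (finrank F ↥(VA' ⊔ ⨆ k ∈ L, Vs k) : ℤ) - finrank F ↥VA' := by
        intro L
        rw [← Finset.sup_eq_iSup]
        by_cases hjL : j ∈ L
        · have hsumL : ∑ k ∈ L, n' k + 1 = ∑ k ∈ L, n k := by
            rw [hn'def, Finset.sum_update_of_mem hjL, Finset.sdiff_singleton_eq_erase]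
            have : n j + ∑ k ∈ L.erase j, n k = ∑ k ∈ L, n k :=
              Finset.add_sum_erase _ _ hjL
            omega
          have heq : VA' ⊔ L.sup Vs = VA ⊔ L.sup Vs := by
            rw [hVA', sup_assoc]
            congr 1
            rw [sup_eq_right]
            exact le_trans ((Submodule.span_singleton_le_iff_mem v _).mpr hvVsj)
              (Finset.le_sup hjL)
          rw [heq, hdimVA']
          have := hnn L
          omega
        · have hsumL : ∑ k ∈ L, n' k = ∑ k ∈ L, n k := by
            rw [hn'def, Finset.sum_update_of_notMem hjL]
          have hge : finrank F ↥(VA ⊔ L.sup Vs) ≤ finrank F ↥(VA' ⊔ L.sup Vs) :=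
            Submodule.finrank_mono (sup_le_sup_right le_sup_left _)
          by_cases htL : finrank F ↥(VA ⊔ L.sup Vs) = d + ∑ k ∈ L, n k
          · -- tight case: v goes outside
            have hLsub : L ⊆ Lstar := hsubLstar L htL hjL
            have hvnotL : v ∉ VA ⊔ L.sup Vs := fun h =>
              hvnot ((sup_le_sup_left (Finset.sup_mono hLsub) VA) h)
            have heq : VA' ⊔ L.sup Vs = (VA ⊔ L.sup Vs) ⊔ F ∙ v := by
              rw [hVA', sup_right_comm]
            have hr : finrank F ↥(VA' ⊔ L.sup Vs) = finrank F ↥(VA ⊔ L.sup Vs) + 1 := by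
              rw [heq]
              exact finrank_sup_span_singleton _ hvnotL
            have := hnn L
            rw [hr, hdimVA', hsumL]
            omega
          · have := hnn L
            have hstrict : d + ∑ k ∈ L, n k + 1 ≤ finrank F ↥(VA ⊔ L.sup Vs) := by omega
            rw [hdimVA', hsumL]
            omega
      obtain ⟨W', hW'le, hW'dim, hW'top⟩ := ih VA' n' hsum' hn2
      set W := Function.update W' j (W' j ⊔ F ∙ v) with hWdef
      have hWj : W j = W' j ⊔ F ∙ v := Function.update_self _ _ _
      have hWk : ∀ k, k ≠ j → W k = W' k := fun k hk => Function.update_of_ne hk _ _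
      have hWle : ∀ k, W k ≤ Vs k := by
        intro k
        by_cases hk : k = j
        · rw [hk, hWj]
          exact sup_le (hW'le j) ((Submodule.span_singleton_le_iff_mem v _).mpr hvVsj)
        · rw [hWk k hk]; exact hW'le k
      have hsupW : (⨆ k, W k) = (⨆ k, W' k) ⊔ F ∙ v := by
        apply le_antisymm
        · apply iSup_le
          intro k
          by_cases hk : k = j
          · rw [hk, hWj]
            exact sup_le (le_sup_of_le_left (le_iSup W' j)) le_sup_right
          · rw [hWk k hk]
            exact le_sup_of_le_left (le_iSup W' k)
        · apply sup_le
          · apply iSup_le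
            intro k
            by_cases hk : k = j
            · rw [hk]
              have h1 : W' j ≤ W j := by rw [hWj]; exact le_sup_left
              exact h1.trans (le_iSup W j)
            · exact (hWk k hk).ge.trans (le_iSup W k)
          · have h1 : (F ∙ v : Submodule F V) ≤ W j := by rw [hWj]; exact le_sup_right
            exact h1.trans (le_iSup W j)
      have htopeq : VA ⊔ ⨆ k, W k = VA' ⊔ ⨆ k, W' k := by
        rw [hsupW, hVA', sup_comm (⨆ k, W' k) (F ∙ v), ← sup_assoc]
      have hdimtop : finrank F ↥(VA ⊔ ⨆ k, W k) = d + ∑ k, n k := by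
        rw [htopeq, hW'top, hdimVA', hsum', hsum]
        omega
      have hv0 : v ≠ 0 := fun h => hvVA (h ▸ VA.zero_mem)
      -- dim of W j
      have hWjle : finrank F ↥(W j) ≤ n j := by
        rw [hWj]
        have := Submodule.finrank_add_le_finrank_add_finrank (W' j) (F ∙ v)
        rw [finrank_span_singleton hv0, hW'dim j, hn'def, Function.update_self] at this
        omega
      have hWkdim : ∀ k, k ≠ j → finrank F ↥(W k) = n k := by
        intro k hk
        rw [hWk k hk]
        have := hW'dim k
        rwa [hn'def, Function.update_of_ne hk] at this
      have hub : finrank F ↥(VA ⊔ ⨆ k, W k) ≤ d + ∑ k, finrank F ↥(W k) := by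
        rw [← Finset.sup_univ_eq_iSup]
        refine le_trans (Submodule.finrank_add_le_finrank_add_finrank _ _) ?_
        have h2 : finrank F ↥(Finset.univ.sup fun k => W k) ≤ ∑ i, finrank F ↥(W i) :=
          finrank_finsetSup_le _ _
        omega
      have hWjdim : finrank F ↥(W j) = n j := by
        by_contra hne
        have hlt : finrank F ↥(W j) < n j := lt_of_le_of_ne hWjle hne
        have hslt : ∑ k, finrank F ↥(W k) < ∑ k, n k := by
          apply Finset.sum_lt_sum
          · intro k _
            by_cases hk : k = j
            · subst hk; exact hWjle
            · exact (hWkdim k hk).le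
          · exact ⟨j, Finset.mem_univ j, hlt⟩
        omega
      refine ⟨W, hWle, ?_, hdimtop⟩
      intro k
      by_cases hk : k = j
      · subst hk; exact hWjdim
      · exact hWkdim k hk

end Aux

theorem stmt_7 (F V : Type*) [Field F] [AddCommGroup V] [Module F V]
    [FiniteDimensional F V] (t : ℕ) (VA : Submodule F V) (Vs : Fin t → Submodule F V)
    (n : Fin t → ℕ)
    (hn : ∀ L : Finset (Fin t),
      ((∑ k ∈ L, n k : ℕ) : ℤ)
        ≤ (finrank F ↥(VA ⊔ ⨆ k ∈ L, Vs k) : ℤ) - finrank F ↥VA) :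
    ∃ W : Fin t → Submodule F V,
      (∀ k, W k ≤ Vs k) ∧
      (∀ k, finrank F ↥(W k) = n k) ∧
      finrank F ↥(VA ⊔ ⨆ k, W k) = finrank F ↥VA + ∑ k, n k := by
  exact aux Vs (∑ k, n k) VA n rfl hn
end

section
/- Let A, B, C be subspaces of a finite-dimensional vector space V over a field F, and form the vector v = (dim A, dim B, dim C, dim(A ⊔ B), dim(A ⊔ C), dim(B ⊔ C), dim(A ⊔ B ⊔ C)) ∈ ℝ^7. Then v lies in the convex cone generated by the eight extreme rays r1 = (1,0,0,1,1,0,1), r2 = (0,1,0,1,0,1,1), r3 = (0,0,1,0,1,1,1), r4 = (1,1,0,1,1,1,1), r5 = (1,0,1,1,1,1,1), r6 = (0,1,1,1,1,1,1), r7 = (1,1,1,1,1,1,1), r8 = (1,1,1,2,2,2,2); that is, there exist nonnegative real numbers c_1, …, c_8 with v = c_1·r1 + c_2·r2 + ⋯ + c_8·r8. -/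
/-!
The dimension vector `(a, b, c, d, e, f, g)` is the rank function of a polymatroid on three
elements, so it satisfies monotonicity `d, e, f ≤ g`, subadditivity `d ≤ a + b`, `e ≤ a + c`,
`f ≤ b + c`, and submodularity over a common summand, e.g. `g + c ≤ e + f`. These nine
inequalities already force membership in the cone: the coefficients of `r₁, r₂, r₃` are
`g - f, g - e, g - d`, those of `r₇` and `r₈` are the positive and negative parts of
`t = a + b + c - d - e - f + g`, and those of `r₄, r₅, r₆` are what remains of the slacks
`a + b - d`, `a + c - e`, `b + c - f` after subtracting the positive part of `t`.
-/

open Module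

theorem Submodule.finrank_sup_add_finrank_le_of_le {K V : Type*} [DivisionRing K]
    [AddCommGroup V] [Module K V] {X Y Z : Submodule K V} [FiniteDimensional K X]
    [FiniteDimensional K Y] (hX : Z ≤ X) (hY : Z ≤ Y) :
    finrank K ↥(X ⊔ Y) + finrank K ↥Z ≤ finrank K ↥X + finrank K ↥Y := by
  rw [← Submodule.finrank_sup_add_finrank_inf_eq X Y]
  exact Nat.add_le_add_left (Submodule.finrank_mono (le_inf hX hY)) _

def polymatroidRays : Fin 8 → Fin 7 → ℝ :=
  ![![1,0,0,1,1,0,1], ![0,1,0,1,0,1,1], ![0,0,1,0,1,1,1],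
    ![1,1,0,1,1,1,1], ![1,0,1,1,1,1,1], ![0,1,1,1,1,1,1],
    ![1,1,1,1,1,1,1], ![1,1,1,2,2,2,2]]

theorem exists_nonneg_polymatroidRays_eq {a b c d e f g : ℝ}
    (hdg : d ≤ g) (heg : e ≤ g) (hfg : f ≤ g)
    (hab : d ≤ a + b) (hac : e ≤ a + c) (hbc : f ≤ b + c)
    (hC : g + c ≤ e + f) (hA : g + a ≤ d + e) (hB : g + b ≤ d + f) :
    ∃ k : Fin 8 → ℝ, (∀ i, 0 ≤ k i) ∧
      ![a, b, c, d, e, f, g] = ∑ i : Fin 8, k i • polymatroidRays i := by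
  set t := a + b + c - d - e - f + g
  set p := max t 0
  have hp : p ≤ a + b - d ∧ p ≤ a + c - e ∧ p ≤ b + c - f :=
    ⟨max_le (by linarith) (by linarith), max_le (by linarith) (by linarith),
      max_le (by linarith) (by linarith)⟩
  have htp : t ≤ p := le_max_left t 0
  have hp0 : 0 ≤ p := le_max_right t 0
  refine ⟨![g - f, g - e, g - d, a + b - d - p, a + c - e - p, b + c - f - p, p, p - t], ?_, ?_⟩
  · intro i
    fin_cases i <;> simp <;> linarith
  · ext j
    fin_cases j <;> simp [Fin.sum_univ_eight, polymatroidRays, t] <;> ring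

theorem stmt_12 (F V : Type*) [Field F] [AddCommGroup V] [Module F V]
    [FiniteDimensional F V] (A B C : Submodule F V) :
    ∃ c : Fin 8 → ℝ, (∀ i, 0 ≤ c i) ∧
      (![(finrank F ↥A : ℝ), (finrank F ↥B : ℝ), (finrank F ↥C : ℝ),
          (finrank F ↥(A ⊔ B) : ℝ), (finrank F ↥(A ⊔ C) : ℝ),
          (finrank F ↥(B ⊔ C) : ℝ), (finrank F ↥(A ⊔ B ⊔ C) : ℝ)] : Fin 7 → ℝ)
        = ∑ i : Fin 8, c i •
            (![![1,0,0,1,1,0,1], ![0,1,0,1,0,1,1], ![0,0,1,0,1,1,1],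
               ![1,1,0,1,1,1,1], ![1,0,1,1,1,1,1], ![0,1,1,1,1,1,1],
               ![1,1,1,1,1,1,1], ![1,1,1,2,2,2,2]] : Fin 8 → Fin 7 → ℝ) i := by
  have mono {X Y : Submodule F V} (h : X ≤ Y) : (finrank F X : ℝ) ≤ finrank F Y := by
    exact_mod_cast Submodule.finrank_mono h
  have subadd (X Y : Submodule F V) : (finrank F ↥(X ⊔ Y) : ℝ) ≤ finrank F X + finrank F Y := by
    exact_mod_cast Submodule.finrank_add_le_finrank_add_finrank X Y
  have submod {X Y Z : Submodule F V} (hX : Z ≤ X) (hY : Z ≤ Y) :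
      (finrank F ↥(X ⊔ Y) : ℝ) + finrank F Z ≤ finrank F X + finrank F Y := by
    exact_mod_cast Submodule.finrank_sup_add_finrank_le_of_le hX hY
  have hAC_BC : (A ⊔ C) ⊔ (B ⊔ C) = A ⊔ B ⊔ C := by rw [sup_sup_sup_comm, sup_idem]
  have hAB_AC : (A ⊔ B) ⊔ (A ⊔ C) = A ⊔ B ⊔ C := by rw [sup_sup_sup_comm, sup_idem, sup_assoc]
  have hAB_BC : (A ⊔ B) ⊔ (B ⊔ C) = A ⊔ B ⊔ C := by
    rw [sup_assoc, ← sup_assoc B B C, sup_idem, ← sup_assoc]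
  exact exists_nonneg_polymatroidRays_eq (mono le_sup_left)
    (mono (sup_le_sup_right le_sup_left C)) (mono (sup_le_sup_right le_sup_right C))
    (subadd A B) (subadd A C) (subadd B C)
    (hAC_BC ▸ submod le_sup_right le_sup_right) (hAB_AC ▸ submod le_sup_left le_sup_left)
    (hAB_BC ▸ submod le_sup_right le_sup_left)
end
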